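/- arXiv:2408.10956 — 7 statements merged into one kernel-verified Lean document; each statement's English description precedes it below -/
import Mathlib

section
/- Let R be a commutative ring, let b_1, …, b_n ∈ R, and let A ∈ M_n(R) be the matrix with diagonal entries A_{ii} = 1 − b_i, superdiagonal entries A_{i,i+1} = −1, and all other entries 0. Then a matrix Z ∈ M_n(R) satisfies ZA = AZ if and only if Z is upper triangular (Z_{ij} = 0 for i > j) and (b_i − b_j)·Z_{ij} = Z_{i,j−1} − Z_{i+1,j} for all 1 ≤ i < j ≤ n, where Z_{i+1,j} is interpreted as 0 when i + 1 > n. -/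
/-!
Write `A = diagonal d - N` with `d i = 1 - b i` and `N` the nilpotent shift. Diagonal matrices
scale rows and columns and `N` shifts them, so the `(i, j)` entry of `ZA - AZ` is
`(b i - b j) Z i j - Z i (j - 1) + Z (i + 1) j`, out-of-range entries read as `0`. Vanishing
below the diagonal follows row by row: for `j ≤ i` the relation at `(i, j)` expresses
`Z (i + 1) j` through entries of row `i` that already vanish, or whose coefficient `b i - b j`
is `0` when `j = i`.
-/

open Matrix

namespace Fin

variable {n : ℕ}

lemma sum_ite_val_add_one_eq {M : Type*} [AddCommMonoid M] (f : Fin n → M)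
    (j : Fin n) :
    ∑ k : Fin n, (if (k : ℕ) + 1 = j then f k else 0)
      = if h : 0 < (j : ℕ) then f ⟨j - 1, by omega⟩ else 0 := by
  split_ifs with hj
  · simp_rw [show ∀ k : Fin n, ((k : ℕ) + 1 = j ↔ k = ⟨j - 1, by omega⟩) from
      fun k => by simp only [Fin.ext_iff]; omega]
    exact Fintype.sum_ite_eq' _ f
  · exact Finset.sum_eq_zero fun k _ => if_neg (by omega)

lemma sum_ite_add_one_eq_val {M : Type*} [AddCommMonoid M] (f : Fin n → M)
    (i : Fin n) :
    ∑ k : Fin n, (if (i : ℕ) + 1 = k then f k else 0)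
      = if h : (i : ℕ) + 1 < n then f ⟨i + 1, h⟩ else 0 := by
  split_ifs with hi
  · simp_rw [show ∀ k : Fin n, ((i : ℕ) + 1 = k ↔ k = ⟨i + 1, hi⟩) from
      fun k => by simp only [Fin.ext_iff]; omega]
    exact Fintype.sum_ite_eq' _ f
  · exact Finset.sum_eq_zero fun k _ => if_neg (by omega)

end Fin

namespace Matrix

variable {n : ℕ} {R : Type*}

def shiftMatrix (n : ℕ) (R : Type*) [Zero R] [One R] : Matrix (Fin n) (Fin n) R :=
  of fun i j => if (i : ℕ) + 1 = j then 1 else 0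

section NonAssocSemiring

variable [NonAssocSemiring R]

lemma mul_shiftMatrix_apply (Z : Matrix (Fin n) (Fin n) R) (i j : Fin n) :
    (Z * shiftMatrix n R) i j = if h : 0 < (j : ℕ) then Z i ⟨j - 1, by omega⟩ else 0 := by
  simp only [mul_apply, shiftMatrix, of_apply, mul_ite, mul_one, mul_zero]
  exact Fin.sum_ite_val_add_one_eq _ j

lemma shiftMatrix_mul_apply (Z : Matrix (Fin n) (Fin n) R) (i j : Fin n) :
    (shiftMatrix n R * Z) i j = if h : (i : ℕ) + 1 < n then Z ⟨i + 1, h⟩ j else 0 := by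
  simp only [mul_apply, shiftMatrix, of_apply, ite_mul, one_mul, zero_mul]
  exact Fin.sum_ite_add_one_eq_val (Z · j) i

end NonAssocSemiring

section CommRing

variable [CommRing R]

lemma commute_diagonal_sub_shiftMatrix_iff (d : Fin n → R) (Z : Matrix (Fin n) (Fin n) R) :
    Z * (diagonal d - shiftMatrix n R) = (diagonal d - shiftMatrix n R) * Z ↔
      ∀ i j : Fin n, (d j - d i) * Z i j
        = (if h : 0 < (j : ℕ) then Z i ⟨j - 1, by omega⟩ else 0)
          - if h : (i : ℕ) + 1 < n then Z ⟨i + 1, h⟩ j else 0 := by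
  rw [← Matrix.ext_iff]
  refine forall₂_congr fun i j => ?_
  rw [mul_sub, sub_mul, sub_apply, sub_apply, mul_diagonal, diagonal_mul,
    mul_shiftMatrix_apply, shiftMatrix_mul_apply]
  constructor <;> intro h <;> linear_combination h

lemma eq_zero_of_lt_of_forall_commute_entry {d : Fin n → R} {Z : Matrix (Fin n) (Fin n) R}
    (hrel : ∀ i j : Fin n, (d j - d i) * Z i j
        = (if h : 0 < (j : ℕ) then Z i ⟨j - 1, by omega⟩ else 0)
          - if h : (i : ℕ) + 1 < n then Z ⟨i + 1, h⟩ j else 0) :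
    ∀ i j : Fin n, (j : ℕ) < i → Z i j = 0 := by
  suffices ∀ m (hm : m < n) (j : Fin n), (j : ℕ) < m → Z ⟨m, hm⟩ j = 0 from
    fun i j => this i i.isLt j
  intro m
  induction m with
  | zero => intro _ j hj; omega
  | succ m ih =>
    intro hm j hj
    have h := hrel ⟨m, by omega⟩ j
    rw [dif_pos hm] at h
    have hleft : (if h : 0 < (j : ℕ) then Z ⟨m, by omega⟩ ⟨j - 1, by omega⟩ else 0) = 0 := by
      split_ifs
      · exact ih _ _ (by simp only; omega)
      · rfl
    have hdiag : (d j - d ⟨m, by omega⟩) * Z ⟨m, by omega⟩ j = 0 := by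
      rcases Nat.lt_succ_iff_lt_or_eq.mp hj with hlt | heq
      · rw [ih _ j hlt, mul_zero]
      · rw [show j = ⟨m, by omega⟩ from Fin.ext heq, sub_self, zero_mul]
    linear_combination h + hleft - hdiag

lemma forall_commute_entry_iff (d : Fin n → R) (Z : Matrix (Fin n) (Fin n) R) :
    (∀ i j : Fin n, (d j - d i) * Z i j
        = (if h : 0 < (j : ℕ) then Z i ⟨j - 1, by omega⟩ else 0)
          - if h : (i : ℕ) + 1 < n then Z ⟨i + 1, h⟩ j else 0) ↔
      (∀ i j : Fin n, (j : ℕ) < i → Z i j = 0) ∧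
        ∀ i j : Fin n, ∀ h : (i : ℕ) < j,
          (d j - d i) * Z i j = Z i ⟨j - 1, by omega⟩ - Z ⟨i + 1, by omega⟩ j := by
  constructor
  · intro hrel
    refine ⟨eq_zero_of_lt_of_forall_commute_entry hrel, fun i j hij => ?_⟩
    simpa only [dif_pos (show 0 < (j : ℕ) by omega), dif_pos (show (i : ℕ) + 1 < n by omega)]
      using hrel i j
  · rintro ⟨hlower, hupper⟩ i j
    rcases lt_or_ge (i : ℕ) j with hij | hji
    · rw [dif_pos (by omega), dif_pos (by omega)]
      exact hupper i j hij
    have hleft : (if h : 0 < (j : ℕ) then Z i ⟨j - 1, by omega⟩ else 0) = 0 := by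
      split_ifs
      · exact hlower _ _ (by simp only; omega)
      · rfl
    have hright : (if h : (i : ℕ) + 1 < n then Z ⟨i + 1, h⟩ j else 0) = 0 := by
      split_ifs
      · exact hlower _ _ (by simp only; omega)
      · rfl
    rw [hleft, hright, sub_zero]
    rcases hji.lt_or_eq with hlt | heq
    · rw [hlower i j hlt, mul_zero]
    · rw [Fin.ext heq, sub_self, zero_mul]

end CommRing

end Matrix

/-- over a commutative ring `R`, with
`A = diag(1 - b_1, …, 1 - b_n) - Σ_k E_{k,k+1}`, a matrix `Z` commutes with `A` if and only if
`Z` is upper triangular and `(b_i - b_j)·Z_{ij} = Z_{i,j-1} - Z_{i+1,j}` for all `i < j`. -/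
theorem stmt0 {n : ℕ} {R : Type*} [CommRing R] (b : Fin n → R)
    (Z : Matrix (Fin n) (Fin n) R) :
    Z * (Matrix.of fun i j : Fin n =>
          if i = j then 1 - b i else if (i : ℕ) + 1 = (j : ℕ) then -1 else 0)
      = (Matrix.of fun i j : Fin n =>
          if i = j then 1 - b i else if (i : ℕ) + 1 = (j : ℕ) then -1 else 0) * Z ↔
    ((∀ i j : Fin n, (j : ℕ) < (i : ℕ) → Z i j = 0) ∧
      ∀ i j : Fin n, ∀ h : (i : ℕ) < (j : ℕ),
        (b i - b j) * Z i j
          = Z i ⟨(j : ℕ) - 1, by have := j.isLt; omega⟩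
            - Z ⟨(i : ℕ) + 1, by have := j.isLt; omega⟩ j) := by
  have hA : (Matrix.of fun i j : Fin n =>
        if i = j then 1 - b i else if (i : ℕ) + 1 = (j : ℕ) then -1 else 0)
      = diagonal (fun i => 1 - b i) - shiftMatrix n R := by
    ext i j
    simp only [of_apply, Matrix.sub_apply, diagonal_apply, shiftMatrix]
    split_ifs <;> simp_all
  rw [hA, commute_diagonal_sub_shiftMatrix_iff, forall_commute_entry_iff]
  simp only [sub_sub_sub_cancel_left]
end

section
/- The R(T)-algebra R := R(T)[z_{ij} : 1 ≤ i ≤ j ≤ n] / I, where I is the ideal generated by the elements (b_i − b_j)·z_{ij} − z_{i,j−1} + z_{i+1,j} for 1 ≤ i < j ≤ n, is isomorphic as an R(T)-algebra to the polynomial ring R(T)[w_1, …, w_n] in n variables, via an isomorphism sending the class of z_{1j} to w_j for 1 ≤ j ≤ n. -/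
noncomputable section

/-- `R(T) = ℤ[e^{±a_1},…,e^{±a_n}]`, the group algebra over `ℤ` of the free abelian
group `ℤⁿ` of characters. -/
abbrev RT (n : ℕ) : Type := AddMonoidAlgebra ℤ (Fin n →₀ ℤ)

instance (n : ℕ) : IsDomain (RT n) := NoZeroDivisors.to_isDomain _

/-- `e^λ` for a character `λ`. -/
def eexp (n : ℕ) (lam : Fin n →₀ ℤ) : RT n := AddMonoidAlgebra.single lam 1

/-- `b_i = 1 - e^{-a_i}`. -/
def bb (n : ℕ) (i : Fin n) : RT n := 1 - eexp n (-(Finsupp.single i 1))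

/-- The ring automorphism of `R(T)` induced by a permutation of the variables:
`e^{a_i} ↦ e^{a_{σ(i)}}`. -/
def permRT (n : ℕ) (σ : Equiv.Perm (Fin n)) : RT n ≃ₐ[ℤ] RT n :=
  AddMonoidAlgebra.domCongr ℤ ℤ (Finsupp.domCongr (σ : Fin n ≃ Fin n))

/-- Index set of the variables `z_{ij}`, `1 ≤ i ≤ j ≤ n`. -/
abbrev Idx (n : ℕ) : Type := {p : Fin n × Fin n // p.1 ≤ p.2}

/-- An element of `Idx n` from natural-number data. -/
def mkIdx (n : ℕ) (a b : ℕ) (ha : a < n) (hb : b < n) (hab : a ≤ b) : Idx n :=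
  ⟨(⟨a, ha⟩, ⟨b, hb⟩), Fin.mk_le_mk.mpr hab⟩

/-- The defining relation `(b_i - b_j)·z_{ij} - z_{i,j-1} + z_{i+1,j}` (0-based indices). -/
def relGen (n : ℕ) (i j : ℕ) (hi : i < n) (hj : j < n) (hij : i < j) :
    MvPolynomial (Idx n) (RT n) :=
  MvPolynomial.C (bb n ⟨i, hi⟩ - bb n ⟨j, hj⟩) * MvPolynomial.X (mkIdx n i j hi hj hij.le)
    - MvPolynomial.X (mkIdx n i (j - 1) hi (by omega) (by omega))
    + MvPolynomial.X (mkIdx n (i + 1) j (by omega) hj (by omega))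

/-- The ideal of relations of the centralizer family. -/
def centIdeal (n : ℕ) : Ideal (MvPolynomial (Idx n) (RT n)) :=
  Ideal.span {f | ∃ (i j : ℕ) (hi : i < n) (hj : j < n) (hij : i < j), f = relGen n i j hi hj hij}

/-- The ring `R = R(T)[z_{ij}]/I`. -/
abbrev centRing (n : ℕ) : Type := MvPolynomial (Idx n) (RT n) ⧸ centIdeal n

/-- The class of the generator `z_{ij}` in `R` (0-based indices). -/
def zbar (n : ℕ) (i j : ℕ) (hi : i < n) (hj : j < n) (hij : i ≤ j) : centRing n :=
  Ideal.Quotient.mk (centIdeal n) (MvPolynomial.X (mkIdx n i j hi hj hij))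

end

/-!
Solving the relation for `z_{i+1,j}` gives `z_{i+1,j} = z_{i,j-1} - (b_i - b_j) z_{ij}`, so every
generator is determined by the first row `z_{1j}`, and conversely these recursively defined
polynomials in the first row satisfy all the relations. The two substitutions are mutually
inverse `R(T)`-algebra maps.
-/

noncomputable section

namespace CentralizerFamily

open MvPolynomial

variable (n : ℕ)

/-- Junk value `0` for `k ≥ n`. -/
def bNat (k : ℕ) : RT n := if h : k < n then bb n ⟨k, h⟩ else 0

/-- The polynomial in the first row `w_j = z_{0j}` that `z_{ij}` must equal (0-based indices). -/
def zPoly : ℕ → ℕ → MvPolynomial (Fin n) (RT n)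
  | 0, j => if h : j < n then X ⟨j, h⟩ else 0
  | i + 1, j => zPoly i (j - 1) - C (bNat n i - bNat n j) * zPoly i j

lemma zPoly_zero {j : ℕ} (hj : j < n) : zPoly n 0 j = X ⟨j, hj⟩ := dif_pos hj

lemma zPoly_succ_of_lt {i j : ℕ} (hi : i < n) (hj : j < n) :
    zPoly n (i + 1) j = zPoly n i (j - 1) - C (bb n ⟨i, hi⟩ - bb n ⟨j, hj⟩) * zPoly n i j := by
  rw [zPoly, bNat, bNat, dif_pos hi, dif_pos hj]

def substZPoly : MvPolynomial (Idx n) (RT n) →ₐ[RT n] MvPolynomial (Fin n) (RT n) :=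
  aeval fun p => zPoly n p.1.1 p.1.2

lemma substZPoly_X_mkIdx {i j : ℕ} (hi : i < n) (hj : j < n) (hij : i ≤ j) :
    substZPoly n (X (mkIdx n i j hi hj hij)) = zPoly n i j := by
  simp [substZPoly, mkIdx]

lemma substZPoly_relGen {i j : ℕ} (hi : i < n) (hj : j < n) (hij : i < j) :
    substZPoly n (relGen n i j hi hj hij) = 0 := by
  simp only [relGen, map_add, map_sub, map_mul, substZPoly_X_mkIdx, algHom_C, algebraMap_eq,
    zPoly_succ_of_lt n hi hj]
  ring

lemma centIdeal_le_ker_substZPoly : centIdeal n ≤ RingHom.ker (substZPoly n) := by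
  refine Ideal.span_le.mpr ?_
  rintro _ ⟨i, j, hi, hj, hij, rfl⟩
  exact substZPoly_relGen n hi hj hij

def toPoly : centRing n →ₐ[RT n] MvPolynomial (Fin n) (RT n) :=
  Ideal.Quotient.liftₐ (centIdeal n) (substZPoly n) fun _ ha => centIdeal_le_ker_substZPoly n ha

lemma toPoly_zbar {i j : ℕ} (hi : i < n) (hj : j < n) (hij : i ≤ j) :
    toPoly n (zbar n i j hi hj hij) = zPoly n i j :=
  substZPoly_X_mkIdx n hi hj hij

def ofPoly : MvPolynomial (Fin n) (RT n) →ₐ[RT n] centRing n :=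
  aeval fun j : Fin n => zbar n 0 j j.pos j.isLt (Nat.zero_le _)

lemma zbar_succ {i j : ℕ} (hi : i + 1 < n) (hj : j < n) (hij : i + 1 ≤ j) :
    zbar n (i + 1) j hi hj hij =
      zbar n i (j - 1) (by omega) (by omega) (by omega)
        - algebraMap (RT n) (centRing n) (bb n ⟨i, by omega⟩ - bb n ⟨j, hj⟩)
          * zbar n i j (by omega) hj (by omega) := by
  have hrel : Ideal.Quotient.mk (centIdeal n) (relGen n i j (by omega) hj hij) = 0 :=
    Ideal.Quotient.eq_zero_iff_mem.mpr (Ideal.subset_span ⟨i, j, _, hj, hij, rfl⟩)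
  rw [← Ideal.Quotient.mk_algebraMap, algebraMap_eq]
  simp only [relGen, map_add, map_sub, map_mul] at hrel ⊢
  unfold zbar
  linear_combination hrel

lemma ofPoly_zPoly (i : ℕ) : ∀ {j : ℕ} (hi : i < n) (hj : j < n) (hij : i ≤ j),
    ofPoly n (zPoly n i j) = zbar n i j hi hj hij := by
  induction i with
  | zero =>
    intro j _ hj _
    simp only [zPoly_zero n hj, ofPoly, aeval_X]
  | succ i ih =>
    intro j hi hj hij
    rw [zPoly_succ_of_lt n (by omega) hj, map_sub, map_mul, ofPoly, aeval_C, ← ofPoly,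
      ih (by omega) (by omega) (by omega), ih (by omega) hj (by omega), zbar_succ]

lemma toPoly_comp_ofPoly : (toPoly n).comp (ofPoly n) = AlgHom.id (RT n) _ := by
  refine algHom_ext fun j => ?_
  simp only [AlgHom.comp_apply, ofPoly, aeval_X, AlgHom.id_apply, toPoly_zbar,
    zPoly_zero n j.isLt, Fin.eta]

lemma ofPoly_comp_toPoly : (ofPoly n).comp (toPoly n) = AlgHom.id (RT n) _ := by
  refine Ideal.Quotient.algHom_ext (RT n) (algHom_ext fun ⟨⟨⟨i, hi⟩, ⟨j, hj⟩⟩, hij⟩ => ?_)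
  exact (congrArg (ofPoly n) (toPoly_zbar n hi hj hij)).trans (ofPoly_zPoly n i hi hj hij)

def centRingEquiv : centRing n ≃ₐ[RT n] MvPolynomial (Fin n) (RT n) :=
  AlgEquiv.ofAlgHom (toPoly n) (ofPoly n) (toPoly_comp_ofPoly n) (ofPoly_comp_toPoly n)

lemma centRingEquiv_zbar_zero (j : Fin n) :
    centRingEquiv n (zbar n 0 j j.pos j.isLt (Nat.zero_le _)) = X j := by
  simp only [centRingEquiv, AlgEquiv.ofAlgHom_apply, toPoly_zbar, zPoly_zero n j.isLt, Fin.eta]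

end CentralizerFamily

end

/-- `R(T)[z_{ij}]/I` is isomorphic, as an `R(T)`-algebra, to the polynomial
ring `R(T)[w_1,…,w_n]`, via an isomorphism sending the class of `z_{1j}` to `w_j`. -/
theorem stmt1 (n : ℕ) (hn : 2 ≤ n) :
    ∃ φ : centRing n ≃ₐ[RT n] MvPolynomial (Fin n) (RT n),
      ∀ j : Fin n, φ (zbar n 0 (j : ℕ) (by omega) j.isLt (Nat.zero_le _)) = MvPolynomial.X j :=
  ⟨CentralizerFamily.centRingEquiv n, CentralizerFamily.centRingEquiv_zbar_zero n⟩
end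

section
/- Let R := R(T)[z_{ij} : 1 ≤ i ≤ j ≤ n] / I, where I is the ideal generated by (b_i − b_j)·z_{ij} − z_{i,j−1} + z_{i+1,j} for 1 ≤ i < j ≤ n. Then the localization of R at the multiplicative set generated by the classes of z_{11}, z_{22}, …, z_{nn} is a flat R(T)-module. -/
noncomputable section

/-- The multiplicative set generated by the classes of the diagonal variables `z_{11},…,z_{nn}`. -/
def diagMonoid (n : ℕ) : Submonoid (centRing n) :=
  Submonoid.closure {x | ∃ i : Fin n, x = zbar n (i : ℕ) (i : ℕ) i.isLt i.isLt le_rfl}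

/-- The coordinate ring `O(Z_{GL_n})`: the localization of `R` at the classes of the `z_{ii}`. -/
abbrev centLoc (n : ℕ) : Type := Localization (M := centRing n) (diagMonoid n)

/-! The relation `(b_i - b_j) z_{ij} - z_{i,j-1} + z_{i+1,j}` solves for `z_{i,j-1}` in terms of
`z_{ij}` and `z_{i+1,j}`, so, column by column from the right, every `z_{ij}` is a polynomial in
the last-column variables `z_{1n}, …, z_{nn}`, and these are subject to no relation. Hence
`R ≅ R(T)[x_1, …, x_n]` is free over `R(T)`; a localization of `R` is flat over `R`, and flatness
is transitive. -/

open MvPolynomial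

section LastColumn

variable (n : ℕ)

/-- The polynomial in the last-column variables that `z_{ij}` is forced to equal. -/
def lastColExpr (i j : ℕ) (hi : i < n) (hj : j < n) (hij : i ≤ j) :
    MvPolynomial (Fin n) (RT n) :=
  if _ : j = n - 1 then X ⟨i, hi⟩
  else
    C (bb n ⟨i, hi⟩ - bb n ⟨j + 1, by omega⟩) * lastColExpr i (j + 1) hi (by omega) (by omega)
      + lastColExpr (i + 1) (j + 1) (by omega) (by omega) (by omega)
  termination_by n - 1 - j

lemma lastColExpr_of_eq {i j : ℕ} (hjn : j = n - 1) (hi : i < n) (hj : j < n) (hij : i ≤ j) :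
    lastColExpr n i j hi hj hij = X ⟨i, hi⟩ := by
  rw [lastColExpr, dif_pos hjn]

lemma lastColExpr_of_succ_eq {i j' j : ℕ} (hjj : j' + 1 = j) (hi : i < n) (hj : j < n)
    (hj' : j' < n) (hij' : i ≤ j') :
    lastColExpr n i j' hi hj' hij' =
      C (bb n ⟨i, hi⟩ - bb n ⟨j, hj⟩) * lastColExpr n i j hi hj (by omega)
        + lastColExpr n (i + 1) j (by omega) hj (by omega) := by
  subst hjj
  rw [lastColExpr, dif_neg (by omega)]

def toLastCol : MvPolynomial (Idx n) (RT n) →ₐ[RT n] MvPolynomial (Fin n) (RT n) :=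
  aeval fun p : Idx n => lastColExpr n p.1.1 p.1.2 p.1.1.isLt p.1.2.isLt p.2

lemma toLastCol_X_mkIdx (i j : ℕ) (hi : i < n) (hj : j < n) (hij : i ≤ j) :
    toLastCol n (X (mkIdx n i j hi hj hij)) = lastColExpr n i j hi hj hij := by
  simp [toLastCol, mkIdx]

lemma toLastCol_relGen (i j : ℕ) (hi : i < n) (hj : j < n) (hij : i < j) :
    toLastCol n (relGen n i j hi hj hij) = 0 := by
  rw [relGen, map_add, map_sub, map_mul, toLastCol_X_mkIdx, toLastCol_X_mkIdx,
    toLastCol_X_mkIdx, lastColExpr_of_succ_eq n (j' := j - 1) (j := j) (by omega) hi hj]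
  simp [toLastCol]

lemma centIdeal_le_ker_toLastCol : centIdeal n ≤ RingHom.ker (toLastCol n) := by
  rw [centIdeal, Ideal.span_le]
  rintro f ⟨i, j, hi, hj, hij, rfl⟩
  exact toLastCol_relGen n i j hi hj hij

def centRingToLastCol : centRing n →ₐ[RT n] MvPolynomial (Fin n) (RT n) :=
  Ideal.Quotient.liftₐ (centIdeal n) (toLastCol n) fun _ ha => centIdeal_le_ker_toLastCol n ha

lemma centRingToLastCol_mk (x : MvPolynomial (Idx n) (RT n)) :
    centRingToLastCol n (Ideal.Quotient.mk (centIdeal n) x) = toLastCol n x :=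
  Ideal.Quotient.liftₐ_apply _ _ _ _

def lastColToCentRing : MvPolynomial (Fin n) (RT n) →ₐ[RT n] centRing n :=
  aeval fun i : Fin n =>
    zbar n i (n - 1) i.isLt (Nat.sub_one_lt_of_lt i.isLt) (Nat.le_sub_one_of_lt i.isLt)

lemma zbar_eq_of_succ_eq {i j' j : ℕ} (hjj : j' + 1 = j) (hi : i < n) (hj : j < n)
    (hj' : j' < n) (hij' : i ≤ j') :
    zbar n i j' hi hj' hij' =
      algebraMap (RT n) (centRing n) (bb n ⟨i, hi⟩ - bb n ⟨j, hj⟩) * zbar n i j hi hj (by omega)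
        + zbar n (i + 1) j (by omega) hj (by omega) := by
  subst hjj
  have hrel : Ideal.Quotient.mk (centIdeal n) (relGen n i (j' + 1) hi hj (by omega)) = 0 :=
    Ideal.Quotient.eq_zero_iff_mem.mpr (Ideal.subset_span ⟨i, j' + 1, hi, hj, by omega, rfl⟩)
  rw [relGen, map_add, map_sub, map_mul, ← algebraMap_eq, Ideal.Quotient.mk_algebraMap] at hrel
  simp only [Nat.add_sub_cancel] at hrel
  unfold zbar
  linear_combination -hrel

lemma lastColToCentRing_lastColExpr (i j : ℕ) (hi : i < n) (hj : j < n) (hij : i ≤ j) :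
    lastColToCentRing n (lastColExpr n i j hi hj hij) = zbar n i j hi hj hij := by
  by_cases hjn : j = n - 1
  · subst hjn
    rw [lastColExpr_of_eq n rfl]
    simp [lastColToCentRing]
  · have hj1 : j + 1 < n := by omega
    rw [lastColExpr_of_succ_eq n rfl hi hj1, map_add, map_mul,
      lastColToCentRing_lastColExpr i (j + 1), lastColToCentRing_lastColExpr (i + 1) (j + 1),
      zbar_eq_of_succ_eq n rfl hi hj1, lastColToCentRing, aeval_C]
termination_by n - 1 - j

def centRingEquivMvPolynomial : centRing n ≃ₐ[RT n] MvPolynomial (Fin n) (RT n) :=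
  AlgEquiv.ofAlgHom (centRingToLastCol n) (lastColToCentRing n)
    (algHom_ext fun i => by
      rw [AlgHom.comp_apply, lastColToCentRing, aeval_X, zbar, centRingToLastCol_mk,
        toLastCol_X_mkIdx, lastColExpr_of_eq n rfl, AlgHom.id_apply])
    (Ideal.Quotient.algHom_ext _ <| algHom_ext fun p => by
      rw [AlgHom.comp_apply, AlgHom.comp_apply, Ideal.Quotient.mkₐ_eq_mk, centRingToLastCol_mk,
        toLastCol, aeval_X, lastColToCentRing_lastColExpr]
      rfl)

end LastColumn

theorem Module.Flat.localization_of_algEquiv_mvPolynomial {A B σ : Type*} [CommRing A]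
    [CommRing B] [Algebra A B] (e : B ≃ₐ[A] MvPolynomial σ A) (S : Submonoid B) :
    Module.Flat A (Localization S) :=
  have : Module.Flat A B := .of_linearEquiv e.toLinearEquiv
  .trans A B (Localization S)

set_option synthInstance.maxHeartbeats 1000000 in
theorem stmt2_general (n : ℕ) : Module.Flat (RT n) (centLoc n) :=
  Module.Flat.localization_of_algEquiv_mvPolynomial (B := centRing n) (centRingEquivMvPolynomial n) _

set_option synthInstance.maxHeartbeats 1000000 in
/-- the localization of `R = R(T)[z_{ij}]/I` at the multiplicative set generated by
the classes of `z_{11},…,z_{nn}` is a flat `R(T)`-module. -/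
theorem stmt2 (n : ℕ) (hn : 2 ≤ n) : Module.Flat (RT n) (centLoc n) :=
  stmt2_general n
end
end

section
/- Let K = Frac(ℤ[e^{±a_1},…,e^{±a_n}]) and let F = K(y_1,…,y_n) be the field of rational functions in n further variables over K. Then the n elements Ω_i := ∏_{k=1}^n (1 − b_i·y_k)^{−1} ∈ F, for 1 ≤ i ≤ n, are algebraically independent over K. -/
noncomputable section

/-- `K = Frac(ℤ[e^{±a_1},…,e^{±a_n}])`. -/
abbrev KK (n : ℕ) : Type := FractionRing (RT n)

/-- `F = K(y_1,…,y_n)`, the rational function field in `n` variables over `K`. -/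
abbrev FF (n : ℕ) : Type := FractionRing (MvPolynomial (Fin n) (KK n))

/-- The image of `b_i` in `F`. -/
def bF (n : ℕ) (i : Fin n) : FF n := algebraMap (KK n) (FF n) (algebraMap (RT n) (KK n) (bb n i))

/-- The variable `y_k` as an element of `F`. -/
def yF (n : ℕ) (k : Fin n) : FF n :=
  algebraMap (MvPolynomial (Fin n) (KK n)) (FF n) (MvPolynomial.X k)

/-!
Since `Ω_i⁻¹ = ∏_k (1 - b_i y_k) = 1 + ∑_{m=1}^n (-b_i)^m e_m(y)`, the vectors
`(Ω_i⁻¹ - 1)_i` and `(e_m(y))_m` differ by the matrix `((-b_i)^m)`, a diagonal matrix times a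
Vandermonde matrix, which is invertible because the `b_i` are distinct and nonzero. Hence the
elementary symmetric polynomials `e_1, …, e_n`, which are algebraically independent, lie in
`K(Ω_1, …, Ω_n)`. In the algebraic matroid this forces `Ω_1, …, Ω_n` to have rank `n`, i.e. to
be algebraically independent.
-/

open Set Finset MvPolynomial Function

theorem AlgebraicIndependent.of_isAlgebraic_adjoin_range {ι R A : Type*} [CommRing R]
    [CommRing A] [IsDomain A] [Algebra R A] [Finite ι] {x y : ι → A}
    (hx : AlgebraicIndependent R x) (hxy : ∀ i, IsAlgebraic (Algebra.adjoin R (range y)) (x i)) :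
    AlgebraicIndependent R y := by
  have := (faithfulSMul_iff_algebraMap_injective R A).mpr hx.algebraMap_injective
  have := Module.nontrivial R A
  let M := AlgebraicIndependent.matroid R A
  have hx_closure : range x ⊆ M.closure (range y) := by
    rintro _ ⟨i, rfl⟩
    rw [AlgebraicIndependent.matroid_closure_eq]
    exact hxy i
  have hy_rank : ENat.card ι ≤ M.eRk (range y) :=
    calc ENat.card ι ≤ (range x).encard := hx.injective.encard_range
      _ ≤ M.eRk (M.closure (range y)) :=
        (AlgebraicIndependent.matroid_indep_iff.mpr hx.to_subtype_range).encard_le_eRk_of_subset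
          hx_closure
      _ = M.eRk (range y) := M.eRk_closure_eq _
  have hy_card : (range y).encard ≤ ENat.card ι := by
    rw [← image_univ, ← encard_univ]
    exact encard_image_le y univ
  have hy_inj : Injective y := by
    rw [← injOn_univ]
    refine finite_univ.injOn_of_encard_image_eq (le_antisymm (encard_image_le y univ) ?_)
    rw [image_univ, encard_univ]
    exact hy_rank.trans (M.eRk_le_encard _)
  have hy_indep : M.Indep (range y) :=
    (M.isRkFinite_of_finite (finite_range y)).indep_of_encard_le_eRk (hy_card.trans hy_rank)
  exact (algebraicIndependent_subtype_range hy_inj).mp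
    (AlgebraicIndependent.matroid_indep_iff.mp hy_indep)

theorem AlgebraicIndependent.of_mem_adjoin_range {ι K E : Type*} [Field K] [Field E]
    [Algebra K E] [Finite ι] {x y : ι → E} (hx : AlgebraicIndependent K x)
    (hxy : ∀ i, x i ∈ IntermediateField.adjoin K (range y)) : AlgebraicIndependent K y :=
  hx.of_isAlgebraic_adjoin_range fun i => IntermediateField.isAlgebraic_adjoin_iff.mp
    (isAlgebraic_algebraMap (⟨x i, hxy i⟩ : IntermediateField.adjoin K (range y)))

theorem Matrix.mem_span_range_of_isUnit_det {ι R M : Type*} [Fintype ι] [DecidableEq ι]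
    [CommRing R] [AddCommGroup M] [Module R M] {V : Matrix ι ι R} (hV : IsUnit V.det)
    {u e : ι → M} (h : ∀ i, u i = ∑ m, V i m • e m) (m : ι) :
    e m ∈ Submodule.span R (range u) := by
  have : e m = ∑ i, V⁻¹ m i • u i := by
    simp_rw [h, Finset.smul_sum, smul_smul]
    rw [Finset.sum_comm]
    simp_rw [← Finset.sum_smul, ← Matrix.mul_apply, Matrix.nonsing_inv_mul V hV,
      Matrix.one_apply, ite_smul, one_smul, zero_smul, Finset.sum_ite_eq,
      if_pos (Finset.mem_univ m)]
  rw [this]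
  exact Submodule.sum_mem _ fun i _ => Submodule.smul_mem _ _ (Submodule.subset_span ⟨i, rfl⟩)

theorem Matrix.det_of_pow_succ_ne_zero {R : Type*} [CommRing R] [IsDomain R] {n : ℕ}
    {v : Fin n → R} (hv : Injective v) (h0 : ∀ i, v i ≠ 0) :
    (Matrix.of fun i (m : Fin n) => v i ^ (m + 1 : ℕ)).det ≠ 0 := by
  have : (Matrix.of fun i (m : Fin n) => v i ^ (m + 1 : ℕ)) = diagonal v * vandermonde v := by
    ext i m
    simp [diagonal_mul, vandermonde_apply, pow_succ']
  rw [this, det_mul, det_diagonal]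
  exact mul_ne_zero (prod_ne_zero_iff.2 fun i _ => h0 i) (det_vandermonde_ne_zero_iff.2 hv)

theorem MvPolynomial.prod_one_add_smul_X_eq_sum_esymm {σ R : Type*} [CommSemiring R] [Fintype σ]
    (c : R) : ∏ k : σ, (1 + c • X k : MvPolynomial σ R) =
      ∑ j ∈ range (Fintype.card σ + 1), c ^ j • esymm σ R j := by
  rw [prod_one_add, sum_powerset, card_univ]
  refine sum_congr rfl fun j _ => ?_
  rw [esymm, Finset.smul_sum]
  refine sum_congr rfl fun t ht => ?_
  rw [prod_smul, prod_const, (mem_powersetCard.1 ht).2]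

theorem MvPolynomial.algebraicIndependent_esymm {σ R : Type*} [CommRing R] [Fintype σ] {n : ℕ}
    (hn : n ≤ Fintype.card σ) :
    AlgebraicIndependent R (fun i : Fin n => esymm σ R (i + 1)) := by
  rw [algebraicIndependent_iff_injective_aeval]
  intro p q hpq
  apply esymmAlgHom_injective R hn
  ext1
  rwa [esymmAlgHom_apply, esymmAlgHom_apply]

theorem eexp_injective (n : ℕ) : Injective (eexp n) :=
  AddMonoidAlgebra.single_left_injective one_ne_zero

theorem bb_injective (n : ℕ) : Injective (bb n) := fun _ _ h =>
  Finsupp.single_left_injective one_ne_zero <|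
    neg_injective (eexp_injective n (sub_right_injective h))

theorem bb_ne_zero (n : ℕ) (i : Fin n) : bb n i ≠ 0 :=
  sub_ne_zero.2 fun h => by simpa using eexp_injective n (h.symm.trans AddMonoidAlgebra.one_def)

theorem prod_one_sub_bF_mul_yF_sub_one (n : ℕ) (i : Fin n) :
    ∏ k, (1 - bF n i * yF n k) - 1 = ∑ m : Fin n,
      (-algebraMap (RT n) (KK n) (bb n i)) ^ (m + 1 : ℕ) •
        algebraMap (MvPolynomial (Fin n) (KK n)) (FF n) (esymm (Fin n) (KK n) (m + 1)) := by
  set c := -algebraMap (RT n) (KK n) (bb n i)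
  let φ := IsScalarTower.toAlgHom (KK n) (MvPolynomial (Fin n) (KK n)) (FF n)
  have : ∏ k, (1 - bF n i * yF n k) = φ (∏ k, (1 + c • X k)) := by
    simp [φ, c, bF, yF, Algebra.smul_def, sub_eq_add_neg,
      IsScalarTower.algebraMap_apply (KK n) (MvPolynomial (Fin n) (KK n)) (FF n)]
  rw [this, prod_one_add_smul_X_eq_sum_esymm, Fintype.card_fin, sum_range_succ',
    ← Fin.sum_univ_eq_sum_range (fun m => c ^ (m + 1) • esymm (Fin n) (KK n) (m + 1))]
  rw [map_add, map_sum]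
  simp only [pow_zero, one_smul, esymm_zero, map_one, add_sub_cancel_right, map_smul, φ,
    IsScalarTower.toAlgHom_apply]

theorem stmt3_general (n : ℕ) :
    AlgebraicIndependent (KK n)
      (fun i : Fin n => (∏ k : Fin n, (1 - bF n i * yF n k))⁻¹) := by
  set Ω : Fin n → FF n := fun i => (∏ k, (1 - bF n i * yF n k))⁻¹
  have he := (algebraicIndependent_esymm (σ := Fin n) (R := KK n) (Fintype.card_fin n).ge).map'
    (f := IsScalarTower.toAlgHom (KK n) (MvPolynomial (Fin n) (KK n)) (FF n))
    (IsFractionRing.injective _ _)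
  have hdet := Matrix.det_of_pow_succ_ne_zero (v := fun i => -algebraMap (RT n) (KK n) (bb n i))
    (neg_injective.comp ((IsFractionRing.injective _ _).comp (bb_injective n)))
    fun i => neg_ne_zero.2 <| (map_ne_zero_iff _ (IsFractionRing.injective _ _)).2 (bb_ne_zero n i)
  refine he.of_mem_adjoin_range fun m => ?_
  have hspan := Matrix.mem_span_range_of_isUnit_det (isUnit_iff_ne_zero.2 hdet)
    (prod_one_sub_bF_mul_yF_sub_one n) m
  refine (Submodule.span_le (p := (IntermediateField.adjoin _ _).toSubalgebra.toSubmodule)).2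
    ?_ hspan
  rintro _ ⟨i, rfl⟩
  have hΩ : Ω i ∈ IntermediateField.adjoin (KK n) (range Ω) :=
    IntermediateField.subset_adjoin _ _ (mem_range_self i)
  refine IntermediateField.sub_mem _ ?_ (IntermediateField.one_mem _)
  simpa [Ω] using IntermediateField.inv_mem _ hΩ

/-- the elements `Ω_i = ∏_{k=1}^n (1 - b_i y_k)⁻¹ ∈ F`, `1 ≤ i ≤ n`, are
algebraically independent over `K`. -/
theorem stmt3 (n : ℕ) (hn : 2 ≤ n) :
    AlgebraicIndependent (KK n)
      (fun i : Fin n => (∏ k : Fin n, (1 - bF n i * yF n k))⁻¹) :=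
  stmt3_general n
end
end

section
/- In the polynomial ring ℤ[b_1,…,b_n, y_1,…,y_n], the determinant of the n×n matrix M whose (i,j) entry is M_{ij} = ∏_{k ≠ j, 1 ≤ k ≤ n} (1 − b_i·y_k) equals ∏_{1 ≤ i < j ≤ n} (b_i − b_j)(y_i − y_j). -/
noncomputable section

/-- The variable `b_i` in `ℤ[b_1,…,b_n,y_1,…,y_n]`. -/
def Bv (n : ℕ) (i : Fin n) : MvPolynomial (Fin n ⊕ Fin n) ℤ := MvPolynomial.X (Sum.inl i)

/-- The variable `y_j` in `ℤ[b_1,…,b_n,y_1,…,y_n]`. -/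
def Yv (n : ℕ) (j : Fin n) : MvPolynomial (Fin n ⊕ Fin n) ℤ := MvPolynomial.X (Sum.inr j)

/-!
Let `P(x) = ∏_k (1 - y_k x)`. Then `∏_{k ≠ j} (1 - y_k x) = P(x) / (1 - y_j x)` has `m`-th
coefficient `∑_{r ≤ m} y_j ^ r P_{m - r}`, so evaluating at `x = b_i` factors the matrix as
`V(b) · L · V(y)ᵀ`, with `V` the Vandermonde matrices and `L` the lower triangular Toeplitz matrix
of the coefficients of `P`. As `P(0) = 1`, `det L = 1`, and the two Vandermonde determinants
give the product.
-/

open Finset Polynomial Matrix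

namespace Polynomial

variable {R : Type*} [CommRing R]

theorem coeff_eq_sum_of_one_sub_C_mul_X_mul {p q : R[X]} {a : R} (h : (1 - C a * X) * q = p)
    (m : ℕ) : q.coeff m = ∑ r ∈ range (m + 1), a ^ r * p.coeff (m - r) := by
  have coeff_zero : p.coeff 0 = q.coeff 0 := by simp [← h, sub_mul, mul_assoc]
  have coeff_succ (m : ℕ) : p.coeff (m + 1) = q.coeff (m + 1) - a * q.coeff m := by
    simp [← h, sub_mul, mul_assoc, coeff_C_mul, coeff_X_mul]
  induction m with
  | zero => simp [coeff_zero]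
  | succ m ih =>
    simp only [sum_range_succ', Nat.add_sub_add_right, pow_succ, mul_comm _ a, mul_assoc,
      ← mul_sum, ← ih, Nat.sub_zero]
    linear_combination -coeff_succ m

theorem natDegree_prod_one_sub_C_mul_X_le {ι : Type*} (s : Finset ι) (y : ι → R) :
    (∏ k ∈ s, (1 - C (y k) * X)).natDegree ≤ #s := by
  refine (natDegree_prod_le _ _).trans ?_
  refine (sum_le_card_nsmul s (fun k => (1 - C (y k) * X).natDegree) 1 fun k _ => ?_).trans_eq
    (smul_eq_mul _ _ |>.trans (mul_one _))
  compute_degree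

end Polynomial

namespace Matrix

variable {R : Type*} [CommRing R]

def lowerToeplitz (n : ℕ) (p : R[X]) : Matrix (Fin n) (Fin n) R :=
  of fun m r => if r ≤ m then p.coeff (m - r) else 0

theorem det_lowerToeplitz (n : ℕ) (p : R[X]) : (lowerToeplitz n p).det = p.coeff 0 ^ n := by
  rw [det_of_isLowerTriangular]
  · simp [lowerToeplitz]
  · intro m r hrm
    simp [lowerToeplitz, not_le.mpr (OrderDual.toDual_lt_toDual.mp hrm)]

theorem sum_lowerToeplitz_mul_pow {n : ℕ} (p : R[X]) (m : Fin n) (a : R) :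
    ∑ r, lowerToeplitz n p m r * a ^ (r : ℕ) = ∑ r ∈ range (m + 1), a ^ r * p.coeff (m - r) := by
  have range_filter : (range n).filter (· ≤ (m : ℕ)) = range (m + 1) := by
    ext r; simp only [mem_filter, mem_range]; omega
  simp only [lowerToeplitz, of_apply, ite_mul, zero_mul, Fin.le_def]
  rw [Fin.sum_univ_eq_sum_range (fun r => if r ≤ (m : ℕ) then p.coeff (m - r) * a ^ r else 0),
    ← sum_filter, range_filter]
  simp only [mul_comm]

theorem of_prod_erase_one_sub_mul_eq_vandermonde_mul {n : ℕ} (b y : Fin n → R) :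
    of (fun i j => ∏ k ∈ univ.erase j, (1 - b i * y k)) =
      vandermonde b * lowerToeplitz n (∏ k, (1 - C (y k) * X)) * (vandermonde y)ᵀ := by
  ext i j
  obtain ⟨q, hq_def⟩ : ∃ q, ∏ k ∈ univ.erase j, (1 - C (y k) * X) = q := ⟨_, rfl⟩
  have hq : (1 - C (y j) * X) * q = ∏ k, (1 - C (y k) * X) := by
    rw [← hq_def]; exact mul_prod_erase univ (fun k => 1 - C (y k) * X) (mem_univ j)
  have hdeg : q.natDegree < n := by
    have := natDegree_prod_one_sub_C_mul_X_le (univ.erase j) y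
    rw [hq_def, card_erase_of_mem (mem_univ j), card_univ, Fintype.card_fin] at this
    have := j.pos
    omega
  have heval : ∏ k ∈ univ.erase j, (1 - b i * y k) = q.eval (b i) := by
    rw [← hq_def, eval_prod]
    refine prod_congr rfl fun k _ => ?_
    simp only [eval_sub, eval_one, eval_mul, eval_C, eval_X]
    ring
  rw [of_apply, heval, eval_eq_sum_range' hdeg, mul_assoc, mul_apply,
    ← Fin.sum_univ_eq_sum_range (fun m => q.coeff m * b i ^ m)]
  refine sum_congr rfl fun m _ => ?_
  simp only [mul_apply, transpose_apply, vandermonde_apply]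
  rw [sum_lowerToeplitz_mul_pow, ← coeff_eq_sum_of_one_sub_C_mul_X_mul hq, mul_comm]

theorem det_prod_erase_one_sub_mul {n : ℕ} (b y : Fin n → R) :
    (of fun i j => ∏ k ∈ univ.erase j, (1 - b i * y k)).det =
      ∏ i, ∏ j ∈ Ioi i, (b i - b j) * (y i - y j) := by
  have hP : (∏ k, (1 - C (y k) * X)).coeff 0 = 1 := by simp [coeff_zero_eq_eval_zero, eval_prod]
  rw [of_prod_erase_one_sub_mul_eq_vandermonde_mul, det_mul, det_mul, det_transpose,
    det_lowerToeplitz, hP, one_pow, mul_one, det_vandermonde, det_vandermonde,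
    ← prod_mul_distrib]
  refine prod_congr rfl fun i _ => ?_
  rw [← prod_mul_distrib]
  exact prod_congr rfl fun j _ => by ring

end Matrix

theorem Finset.prod_filter_lt_eq_prod_Ioi {α M : Type*} [Fintype α] [LinearOrder α]
    [LocallyFiniteOrderTop α] [CommMonoid M] (f : α → α → M) :
    ∏ p ∈ univ.filter (fun p : α × α => p.1 < p.2), f p.1 p.2 = ∏ i, ∏ j ∈ Ioi i, f i j := by
  rw [prod_filter, Fintype.prod_prod_type]
  simp [← prod_filter, filter_lt_eq_Ioi]

theorem stmt4_general (n : ℕ) :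
    Matrix.det (Matrix.of fun i j : Fin n =>
        ∏ k ∈ Finset.univ.erase j, (1 - Bv n i * Yv n k))
      = ∏ p ∈ Finset.univ.filter (fun p : Fin n × Fin n => p.1 < p.2),
          ((Bv n p.1 - Bv n p.2) * (Yv n p.1 - Yv n p.2)) := by
  rw [prod_filter_lt_eq_prod_Ioi (fun i j => (Bv n i - Bv n j) * (Yv n i - Yv n j))]
  exact det_prod_erase_one_sub_mul (Bv n) (Yv n)

/-- in `ℤ[b_1,…,b_n,y_1,…,y_n]`,
`det (∏_{k ≠ j} (1 - b_i y_k))_{ij} = ∏_{i<j} (b_i - b_j)(y_i - y_j)`. -/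
theorem stmt4 (n : ℕ) (hn : 1 ≤ n) :
    Matrix.det (Matrix.of fun i j : Fin n =>
        ∏ k ∈ Finset.univ.erase j, (1 - Bv n i * Yv n k))
      = ∏ p ∈ Finset.univ.filter (fun p : Fin n × Fin n => p.1 < p.2),
          ((Bv n p.1 - Bv n p.2) * (Yv n p.1 - Yv n p.2)) :=
  stmt4_general n
end
end

section
/- Let w ∈ W̃_n be affine Grassmannian and let γ ∈ ℤⁿ be antidominant. Then w ∘ t_γ is affine Grassmannian and ℓ(w ∘ t_γ) = ℓ(w) + ℓ(t_γ), where ℓ(t_γ) = Σ_{1 ≤ i < j ≤ n} (γ_j − γ_i). -/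
noncomputable section

/-- The 0-based residue of `m` modulo `n`, corresponding to the 1-based representative
`i ∈ {1,…,n}` with `m ≡ i (mod n)`: `resid n m = i - 1`. -/
def resid (n : ℕ) [NeZero n] (m : ℤ) : Fin n :=
  ⟨((m - 1) % (n : ℤ)).toNat, by
    have hn : 0 < (n : ℤ) := by exact_mod_cast Nat.pos_of_ne_zero (NeZero.ne n)
    have h1 : 0 ≤ (m - 1) % (n : ℤ) := Int.emod_nonneg _ (by omega)
    have h2 : (m - 1) % (n : ℤ) < n := Int.emod_lt_of_pos _ hn
    omega⟩

/-- The translation element `t_λ : ℤ → ℤ`, `t_λ(i + kn) = i + (λ_i + k)n` for `1 ≤ i ≤ n`. -/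
def tFun (n : ℕ) [NeZero n] (lam : Fin n → ℤ) : ℤ → ℤ :=
  fun m => m + n * lam (resid n m)

/-- The lift `ū : ℤ → ℤ` of a permutation `u` of `{1,…,n}` (0-based: of `Fin n`),
`ū(i + kn) = u(i) + kn` for `1 ≤ i ≤ n`. -/
def ubarFun (n : ℕ) [NeZero n] (u : Equiv.Perm (Fin n)) : ℤ → ℤ :=
  fun m => ((u (resid n m) : ℕ) + 1 : ℤ) + n * ((m - 1) / n)

/-- Membership in the group `W̃_n` of affine permutations: `w : ℤ → ℤ` is a bijection
with `w(i + n) = w(i) + n`. -/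
def IsAffPerm (n : ℕ) (w : ℤ → ℤ) : Prop :=
  Function.Bijective w ∧ ∀ i : ℤ, w (i + n) = w i + n

/-- The length `ℓ(w) = #{(i,j) : 1 ≤ i ≤ n, j ∈ ℤ, i < j, w(i) > w(j)}`. -/
def lenAff (n : ℕ) (w : ℤ → ℤ) : ℕ :=
  Set.ncard {p : ℤ × ℤ | 1 ≤ p.1 ∧ p.1 ≤ n ∧ p.1 < p.2 ∧ w p.2 < w p.1}

/-- `w` is affine Grassmannian: `w(1) < w(2) < ⋯ < w(n)`. -/
def IsAffGr (n : ℕ) (w : ℤ → ℤ) : Prop :=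
  ∀ i : ℤ, 1 ≤ i → i < n → w i < w (i + 1)

/-- The sum `Σ_{1 ≤ i < j ≤ n} (λ_j - λ_i)`. -/
def pairSum (n : ℕ) (lam : Fin n → ℤ) : ℤ :=
  ∑ p ∈ Finset.univ.filter (fun p : Fin n × Fin n => p.1 < p.2), (lam p.2 - lam p.1)

/-- The number of inversions `#{(i,j) : 1 ≤ i < j ≤ n, u(i) > u(j)}` of `u`. -/
def invCount (n : ℕ) (u : Equiv.Perm (Fin n)) : ℕ :=
  (Finset.univ.filter (fun p : Fin n × Fin n => p.1 < p.2 ∧ u p.2 < u p.1)).card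

/-!
Split the inversions of a periodic `w` according to the residues `a + 1, b + 1 ∈ {1,…,n}` of
their two positions: those over `(a, b)` are the pairs `(a + 1, b + 1 + kn)` with
`a - b < kn < w(a+1) - w(b+1)`, so `ℓ(w)` is a sum of counts of multiples of `n` in open intervals.
Passing from `w` to `w ∘ t_γ` moves the upper end of the `(a, b)` interval by `n(γ_a - γ_b)`.
As `w` increases on `{1,…,n}` and `γ` is antidominant, this shift and `w(a+1) - w(b+1)` both have
the sign of `a - b`: for `a > b` the count grows by exactly `γ_a - γ_b`, for `a ≤ b` it stays `0`.
Hence `ℓ(w ∘ t_γ) = ℓ(w) + Σ_{a > b} (γ_a - γ_b)`, and the case `w = id` identifies the sum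
with `ℓ(t_γ)`.
-/

open Finset

section Periodic

variable {n : ℕ} {w : ℤ → ℤ}

theorem map_add_mul_of_periodic (hw : ∀ i : ℤ, w (i + n) = w i + n) (m k : ℤ) :
    w (m + k * n) = w m + k * n := by
  have hper : Function.Periodic (fun i => w i - i) (n : ℤ) := fun i => by
    simp only [hw]; ring
  have := hper.int_mul k m
  simp only [Int.cast_id] at this
  linarith

theorem IsAffGr.strictMonoOn (hgr : IsAffGr n w) : StrictMonoOn w (Set.Icc 1 n) :=
  strictMonoOn_of_lt_add_one Set.ordConnected_Icc fun i _ hi hi' =>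
    hgr i hi.1 (by simpa using hi'.2)

theorem lenAff_id : lenAff n id = 0 := by
  rw [lenAff, ← Set.ncard_empty (ℤ × ℤ)]
  exact congrArg Set.ncard (Set.eq_empty_of_forall_notMem fun p hp => by
    simp only [id, Set.mem_ofPred_eq] at hp
    omega)

end Periodic

section Residues

variable {n : ℕ} [NeZero n]

theorem coe_resid (m : ℤ) : ((resid n m : ℕ) : ℤ) = (m - 1) % n :=
  Int.toNat_of_nonneg (Int.emod_nonneg _ (by exact_mod_cast NeZero.ne n))

theorem coe_resid_add_one_add_ediv_mul (m : ℤ) :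
    ((resid n m : ℕ) : ℤ) + 1 + (m - 1) / n * n = m := by
  rw [coe_resid]
  linarith [Int.emod_add_ediv_mul (m - 1) n]

theorem coe_resid_of_mem_Icc {m : ℤ} (h1 : 1 ≤ m) (h2 : m ≤ n) :
    ((resid n m : ℕ) : ℤ) = m - 1 := by
  rw [coe_resid, Int.emod_eq_of_lt (by omega) (by omega)]

theorem resid_coe_add_one (a : Fin n) : resid n ((a : ℤ) + 1) = a := by
  have := coe_resid_of_mem_Icc (n := n) (m := (a : ℤ) + 1) (by omega) (by omega)
  exact Fin.ext (by omega)

theorem resid_add_self (m : ℤ) : resid n (m + n) = resid n m := by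
  refine Fin.ext (Nat.cast_injective (R := ℤ) ?_)
  simp only [coe_resid, add_sub_right_comm, Int.add_emod_right]

theorem Fin.eq_of_coe_add_mul_eq {b b' : Fin n} {k k' : ℤ}
    (h : (b : ℤ) + k * n = b' + k' * n) : b = b' ∧ k = k' := by
  have hb : (b : ℤ) = b' := by
    have := congrArg (· % (n : ℤ)) h
    simpa only [Int.add_mul_emod_self_right,
      Int.emod_eq_of_lt (Int.natCast_nonneg _) (Int.ofNat_lt.mpr (Fin.is_lt _))] using this
  refine ⟨Fin.ext (by exact_mod_cast hb), ?_⟩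
  rw [hb, add_right_inj] at h
  exact mul_right_cancel₀ (by exact_mod_cast NeZero.ne n) h

theorem tFun_add_self (γ : Fin n → ℤ) (m : ℤ) : tFun n γ (m + n) = tFun n γ m + n := by
  simp only [tFun, resid_add_self]
  ring

theorem map_tFun_of_periodic {w : ℤ → ℤ} (hw : ∀ i : ℤ, w (i + n) = w i + n)
    (γ : Fin n → ℤ) (m : ℤ) : w (tFun n γ m) = w m + γ (resid n m) * n := by
  rw [tFun, mul_comm]
  exact map_add_mul_of_periodic hw _ _

end Residues

section Multiples

variable {n : ℕ} [NeZero n]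

def multsBetween (n : ℕ) (x y : ℤ) : Finset ℤ :=
  Ioc (x / n) ((y - 1) / n)

theorem mem_multsBetween {x y k : ℤ} : k ∈ multsBetween n x y ↔ x < k * n ∧ k * n < y := by
  have hn : (0 : ℤ) < n := Int.natCast_pos.mpr (NeZero.pos n)
  rw [multsBetween, mem_Ioc, Int.ediv_lt_iff_lt_mul hn, Int.le_ediv_iff_mul_le hn]
  omega

theorem multsBetween_eq_empty {x y : ℤ} (hx : -(n : ℤ) ≤ x) (hy : y ≤ 0) :
    multsBetween n x y = ∅ := by
  have hn : (0 : ℤ) < n := Int.natCast_pos.mpr (NeZero.pos n)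
  refine eq_empty_of_forall_notMem fun k hk => ?_
  obtain ⟨hlo, hhi⟩ := mem_multsBetween.mp hk
  rcases le_or_gt k (-1) with hk | hk
  · nlinarith
  · nlinarith

theorem card_multsBetween_add_mul {x y g : ℤ} (hx : x < n) (hy : 0 < y) (hg : 0 ≤ g) :
    #(multsBetween n x (y + n * g)) = #(multsBetween n x y) + g.toNat := by
  have hn : (0 : ℤ) < n := Int.natCast_pos.mpr (NeZero.pos n)
  have hx' : x / n < 1 := (Int.ediv_lt_iff_lt_mul hn).mpr (by simpa using hx)
  have hy' : 0 ≤ (y - 1) / n := Int.ediv_nonneg (by omega) hn.le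
  have hshift : (y + n * g - 1) / n = (y - 1) / n + g := by
    rw [← Int.add_mul_ediv_left _ _ hn.ne']
    ring_nf
  simp only [multsBetween, Int.card_Ioc, hshift]
  omega

end Multiples

section Length

variable {n : ℕ} [NeZero n] {w : ℤ → ℤ}

theorem lenAff_eq_sum_card_multsBetween (hw : ∀ i : ℤ, w (i + n) = w i + n) :
    lenAff n w = ∑ q : Fin n × Fin n,
      #(multsBetween n ((q.1 : ℤ) - q.2) (w ((q.1 : ℤ) + 1) - w ((q.2 : ℤ) + 1))) := by
  let φ : (Σ _ : Fin n × Fin n, ℤ) → ℤ × ℤ :=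
    fun x => ((x.1.1 : ℤ) + 1, (x.1.2 : ℤ) + 1 + x.2 * n)
  have hφ : Function.Injective φ := by
    rintro ⟨⟨a, b⟩, k⟩ ⟨⟨a', b'⟩, k'⟩ h
    simp only [φ, Prod.mk.injEq] at h
    obtain ⟨hb, hk⟩ :=
      Fin.eq_of_coe_add_mul_eq (n := n) (by linarith [h.2] : (b : ℤ) + k * n = b' + k' * n)
    have ha : a = a' := Fin.ext (by exact_mod_cast add_right_cancel h.1)
    subst ha hb hk
    rfl
  have hS : {p : ℤ × ℤ | 1 ≤ p.1 ∧ p.1 ≤ n ∧ p.1 < p.2 ∧ w p.2 < w p.1} =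
      ↑((univ.sigma fun q : Fin n × Fin n =>
        multsBetween n ((q.1 : ℤ) - q.2) (w ((q.1 : ℤ) + 1) - w ((q.2 : ℤ) + 1))).image φ) := by
    ext ⟨i, j⟩
    simp only [Set.mem_ofPred_eq, coe_image, Set.mem_image, mem_coe, mem_sigma, mem_univ, true_and,
      mem_multsBetween]
    constructor
    · rintro ⟨hi1, hin, hij, hwij⟩
      have hi := coe_resid_of_mem_Icc (n := n) hi1 hin
      have hj := coe_resid_add_one_add_ediv_mul (n := n) j
      have hwj : w j = w ((resid n j : ℤ) + 1) + (j - 1) / n * n := by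
        conv_lhs => rw [← hj]
        exact map_add_mul_of_periodic hw _ _
      refine ⟨⟨(resid n i, resid n j), (j - 1) / n⟩, ⟨by linarith, ?_⟩, ?_⟩
      · rw [show (resid n i : ℤ) + 1 = i by omega]
        linarith
      · simp only [φ, Prod.mk.injEq]
        omega
    · rintro ⟨⟨⟨a, b⟩, k⟩, ⟨hlo, hhi⟩, h⟩
      simp only [φ, Prod.mk.injEq] at h
      obtain ⟨rfl, rfl⟩ := h
      rw [map_add_mul_of_periodic hw]
      have := a.is_lt
      refine ⟨by omega, by omega, by linarith, by linarith⟩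
  rw [lenAff, hS, Set.ncard_coe_finset, card_image_of_injective _ hφ, card_sigma]

variable {γ : Fin n → ℤ}

theorem IsAffGr.comp_tFun (hw : ∀ i : ℤ, w (i + n) = w i + n) (hgr : IsAffGr n w)
    (hγ : Monotone γ) : IsAffGr n (w ∘ tFun n γ) := by
  intro i hi1 hin
  have hres : resid n i ≤ resid n (i + 1) := by
    rw [Fin.le_def, ← Nat.cast_le (α := ℤ), coe_resid_of_mem_Icc hi1 hin.le,
      coe_resid_of_mem_Icc (by omega) (by omega)]
    omega
  have hn : (0 : ℤ) ≤ n := Int.natCast_nonneg n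
  simp only [Function.comp_apply, map_tFun_of_periodic hw]
  nlinarith [hgr i hi1 hin, hγ hres]

theorem card_multsBetween_comp_tFun (hw : ∀ i : ℤ, w (i + n) = w i + n) (hgr : IsAffGr n w)
    (hγ : Monotone γ) (a b : Fin n) :
    #(multsBetween n ((a : ℤ) - b)
        ((w ∘ tFun n γ) ((a : ℤ) + 1) - (w ∘ tFun n γ) ((b : ℤ) + 1))) =
      #(multsBetween n ((a : ℤ) - b) (w ((a : ℤ) + 1) - w ((b : ℤ) + 1))) +
        (γ a - γ b).toNat := by
  have hn : (0 : ℤ) < n := Int.natCast_pos.mpr (NeZero.pos n)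
  have hmono := hgr.strictMonoOn
  have ha := a.is_lt
  have hb := b.is_lt
  have hmem : ∀ c : Fin n, (c : ℤ) + 1 ∈ Set.Icc (1 : ℤ) n := fun c => by
    have := c.is_lt
    constructor <;> omega
  simp only [Function.comp_apply, map_tFun_of_periodic hw, resid_coe_add_one]
  rw [show w ((a : ℤ) + 1) + γ a * n - (w ((b : ℤ) + 1) + γ b * n) =
    w ((a : ℤ) + 1) - w ((b : ℤ) + 1) + n * (γ a - γ b) by ring]
  rcases lt_or_ge b a with hba | hab
  · have hw_lt := hmono (hmem b) (hmem a) (by simpa using hba)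
    exact card_multsBetween_add_mul (by omega) (by omega) (by linarith [hγ hba.le])
  · have hw_le := hmono.monotoneOn (hmem a) (hmem b) (by simpa using hab)
    have hγ_le := hγ hab
    rw [multsBetween_eq_empty (by omega) (by nlinarith),
      multsBetween_eq_empty (by omega) (by omega), Int.toNat_of_nonpos (by omega), add_zero]

theorem lenAff_comp_tFun (hw : ∀ i : ℤ, w (i + n) = w i + n) (hgr : IsAffGr n w)
    (hγ : Monotone γ) :
    lenAff n (w ∘ tFun n γ) = lenAff n w + ∑ q : Fin n × Fin n, (γ q.1 - γ q.2).toNat := by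
  have hwt : ∀ i : ℤ, (w ∘ tFun n γ) (i + n) = (w ∘ tFun n γ) i + n := fun i => by
    simp only [Function.comp_apply, tFun_add_self, hw]
  rw [lenAff_eq_sum_card_multsBetween hw, lenAff_eq_sum_card_multsBetween hwt, ← sum_add_distrib]
  exact sum_congr rfl fun q _ => card_multsBetween_comp_tFun hw hgr hγ q.1 q.2

end Length

theorem sum_toNat_sub_eq_pairSum {n : ℕ} {γ : Fin n → ℤ} (hγ : Monotone γ) :
    ((∑ q : Fin n × Fin n, (γ q.1 - γ q.2).toNat : ℕ) : ℤ) = pairSum n γ := by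
  rw [pairSum, sum_filter, Nat.cast_sum, ← (Equiv.prodComm _ _).sum_comp]
  refine sum_congr rfl fun q _ => ?_
  simp only [Equiv.prodComm_apply, Prod.fst_swap, Prod.snd_swap]
  split_ifs with h
  · exact Int.toNat_of_nonneg (by linarith [hγ h.le])
  · rw [Int.toNat_of_nonpos (by linarith [hγ (not_lt.mp h)]), Nat.cast_zero]

theorem stmt11_general (n : ℕ) [NeZero n] (w : ℤ → ℤ) (hw : IsAffPerm n w)
    (hgr : IsAffGr n w) (γ : Fin n → ℤ) (hγ : Monotone γ) :
    IsAffGr n (w ∘ tFun n γ) ∧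
    lenAff n (w ∘ tFun n γ) = lenAff n w + lenAff n (tFun n γ) ∧
    (lenAff n (tFun n γ) : ℤ) = pairSum n γ := by
  have ht : lenAff n (tFun n γ) = ∑ q : Fin n × Fin n, (γ q.1 - γ q.2).toNat := by
    simpa [lenAff_id] using
      lenAff_comp_tFun (w := id) (fun _ => rfl) (fun i _ _ => lt_add_one i) hγ
  refine ⟨hgr.comp_tFun hw.2 hγ, ?_, ?_⟩
  · rw [lenAff_comp_tFun hw.2 hgr hγ, ht]
  · rw [ht, sum_toNat_sub_eq_pairSum hγ]

/-- if `w ∈ W̃_n` is affine Grassmannian and `γ` is antidominant, then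
`w ∘ t_γ` is affine Grassmannian and `ℓ(w ∘ t_γ) = ℓ(w) + ℓ(t_γ)`, where
`ℓ(t_γ) = Σ_{1 ≤ i < j ≤ n} (γ_j - γ_i)`. -/
theorem stmt11 (n : ℕ) [NeZero n] (hn : 2 ≤ n) (w : ℤ → ℤ) (hw : IsAffPerm n w)
    (hgr : IsAffGr n w) (γ : Fin n → ℤ) (hγ : Monotone γ) :
    IsAffGr n (w ∘ tFun n γ) ∧
    lenAff n (w ∘ tFun n γ) = lenAff n w + lenAff n (tFun n γ) ∧
    (lenAff n (tFun n γ) : ℤ) = pairSum n γ :=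
  stmt11_general n w hw hgr γ hγ
end
end

section
/- Let u be a permutation of {1,…,n} and γ ∈ ℤⁿ. Define γ_u ∈ ℤⁿ by (γ_u)_j := −#{i : j ≤ i ≤ n−1 and u(i) > u(i+1)} for 1 ≤ j ≤ n. Then ū ∘ t_γ ∈ W̃_n is affine Grassmannian if and only if γ − γ_u is antidominant. -/
noncomputable section

/-- `γ_u ∈ ℤⁿ`, `(γ_u)_j = -#{i : j ≤ i ≤ n-1, u(i) > u(i+1)}` (1-based indexing;
in 0-based terms the descent positions `i` range over `Fin (n-1)`). -/
def gammaU (n : ℕ) (u : Equiv.Perm (Fin n)) : Fin n → ℤ := fun j =>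
  -((Finset.univ.filter (fun i : Fin (n - 1) =>
      (j : ℕ) ≤ (i : ℕ) ∧
        u ⟨(i : ℕ) + 1, by have := i.isLt; omega⟩
          < u ⟨(i : ℕ), by have := i.isLt; omega⟩)).card : ℤ)

/-!
For `0 ≤ i < n` one has `(ū ∘ t_γ)(i + 1) = u(i) + 1 + nγ_i` with `0 ≤ u(i) < n`, so comparing
two such values is a lexicographic comparison of `(γ_i, u(i))`: the inequality
`(ū ∘ t_γ)(i + 1) < (ū ∘ t_γ)(i + 2)` says `γ_i + [u(i) > u(i+1)] ≤ γ_{i+1}`. Since `γ_u` grows by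
exactly `[u(i) > u(i+1)]` from `i` to `i + 1`, this is the adjacent inequality
`(γ - γ_u)_i ≤ (γ - γ_u)_{i+1}`.
-/

open Finset

lemma add_mul_lt_add_mul_iff {n a b x y : ℤ} (ha : 0 ≤ a) (han : a < n) (hb : 0 ≤ b)
    (hbn : b < n) (hab : a ≠ b) :
    a + n * x < b + n * y ↔ x + (if b < a then 1 else 0) ≤ y := by
  obtain h | h | h : y - x ≤ -1 ∨ y = x ∨ 1 ≤ y - x := by omega
  · have : n * (y - x) ≤ -n := by nlinarith
    split_ifs <;> constructor <;> intro <;> linarith [mul_sub n y x]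
  · subst h; split_ifs <;> omega
  · have : n ≤ n * (y - x) := by nlinarith
    split_ifs <;> constructor <;> intro <;> linarith [mul_sub n y x]

lemma card_filter_le_val_and {k : ℕ} (p : Fin k → Prop) [DecidablePred p] (j : ℕ) (hj : j < k) :
    #{i : Fin k | j ≤ (i : ℕ) ∧ p i} =
      #{i : Fin k | j < (i : ℕ) ∧ p i} + if p ⟨j, hj⟩ then 1 else 0 := by
  simp only [card_filter]
  rw [← Fintype.sum_ite_eq' (⟨j, hj⟩ : Fin k) (fun i => if p i then 1 else 0), ← sum_add_distrib]
  refine sum_congr rfl fun i _ => ?_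
  by_cases hi : i = ⟨j, hj⟩
  · subst hi; simp
  · have hji : j ≠ i := fun h => hi (Fin.ext h.symm)
    by_cases hj' : j ≤ (i : ℕ) <;> simp [hi, hj', lt_iff_le_and_ne, hji]

lemma gammaU_succ {m : ℕ} (u : Equiv.Perm (Fin (m + 1))) (i : Fin m) :
    gammaU (m + 1) u i.succ =
      gammaU (m + 1) u i.castSucc + if u i.succ < u i.castSucc then 1 else 0 := by
  unfold gammaU
  simp only [Fin.val_succ, Fin.val_castSucc]
  rw [card_filter_le_val_and _ i (by omega)]
  simp only [Nat.lt_iff_add_one_le]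
  push_cast
  rw [neg_add]
  exact (neg_add_cancel_right _ _).symm

lemma resid_add_mul {n : ℕ} [NeZero n] (m c : ℤ) : resid n (m + n * c) = resid n m := by
  simp only [resid, add_sub_right_comm, Int.add_mul_emod_self_left]

lemma resid_val_add_one {n : ℕ} [NeZero n] (i : Fin n) : resid n ((i : ℤ) + 1) = i := by
  ext
  simp [resid, Int.emod_eq_of_lt]

lemma ubarFun_comp_tFun_apply {n : ℕ} [NeZero n] (u : Equiv.Perm (Fin n)) (γ : Fin n → ℤ)
    (i : Fin n) :
    (ubarFun n u ∘ tFun n γ) ((i : ℤ) + 1) = (u i : ℤ) + 1 + n * γ i := by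
  have hdiv : ((i : ℤ) + 1 + n * γ i - 1) / n = γ i := by
    rw [add_sub_right_comm, add_sub_cancel_right, Int.add_mul_ediv_left _ _ (mod_cast NeZero.ne n),
      Int.ediv_eq_zero_of_lt (by omega) (by simp), zero_add]
  simp only [Function.comp_apply, tFun, ubarFun, resid_add_mul, resid_val_add_one, hdiv]

lemma isAffGr_add_one_iff {m : ℕ} (w : ℤ → ℤ) :
    IsAffGr (m + 1) w ↔ ∀ i : Fin m, w ((i.castSucc : ℕ) + 1) < w ((i.succ : ℕ) + 1) := by
  refine ⟨fun h i => ?_, fun h k hk1 hkm => ?_⟩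
  · simpa [add_assoc] using h (i + 1) (by omega) (by push_cast; omega)
  · lift k - 1 to ℕ using (by omega) with j hj
    simpa [show k = j + 1 by omega, add_assoc] using h ⟨j, by push_cast at hkm; omega⟩

lemma ubarFun_comp_tFun_lt_iff {n : ℕ} [NeZero n] (u : Equiv.Perm (Fin n)) (γ : Fin n → ℤ)
    {i j : Fin n} (hij : i ≠ j) :
    (ubarFun n u ∘ tFun n γ) ((i : ℤ) + 1) < (ubarFun n u ∘ tFun n γ) ((j : ℤ) + 1) ↔
      γ i + (if u j < u i then 1 else 0) ≤ γ j := by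
  rw [ubarFun_comp_tFun_apply, ubarFun_comp_tFun_apply, add_right_comm, add_right_comm (u j : ℤ),
    add_lt_add_iff_right, add_mul_lt_add_mul_iff (by positivity) (by simp) (by positivity) (by simp)
      (by simpa [Fin.val_inj] using hij)]
  simp only [Nat.cast_lt, Fin.val_fin_lt]

theorem stmt12_general (n : ℕ) [NeZero n] (u : Equiv.Perm (Fin n)) (γ : Fin n → ℤ) :
    IsAffGr n (ubarFun n u ∘ tFun n γ) ↔ Monotone (γ - gammaU n u) := by
  obtain ⟨m, rfl⟩ := Nat.exists_eq_add_one_of_ne_zero (NeZero.ne n)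
  rw [isAffGr_add_one_iff, Fin.monotone_iff_le_succ]
  refine forall_congr' fun i => ?_
  rw [ubarFun_comp_tFun_lt_iff u γ (Fin.castSucc_lt_succ (i := i)).ne, Pi.sub_apply, Pi.sub_apply,
    gammaU_succ]
  split_ifs <;> omega

/-- `ū ∘ t_γ` is affine Grassmannian iff `γ - γ_u` is antidominant. -/
theorem stmt12 (n : ℕ) [NeZero n] (hn : 2 ≤ n) (u : Equiv.Perm (Fin n)) (γ : Fin n → ℤ) :
    IsAffGr n (ubarFun n u ∘ tFun n γ) ↔ Monotone (γ - gammaU n u) :=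
  stmt12_general n u γ
end
end
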